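/- arXiv:1810.00778 — 2 statements merged into one kernel-verified Lean document; each statement's English description precedes it below -/
import Mathlib

section
/- Let A and B be Hausdorff spaces and f : A → B continuous with closure(f(A)) ≠ B. Then f is not an epimorphism in the category of Hausdorff spaces: there exist a Hausdorff space C and distinct continuous maps g, h : B → C with g ∘ f = h ∘ f. -/
/-!
Glue two copies of `B` along the closed set `K = closure (Set.range f)`. The result is Hausdorff:
points over distinct points of `B` are separated by pulling back a separation in `B`, and the two
copies of a point outside `K` are separated by the two copies of the open set `Kᶜ`. The two
inclusions of `B` agree on `K`, hence after `f`, but differ at any point outside `K`.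
-/

universe u

open Set Topology

namespace Setoid

variable {X : Type*}

def IsSaturated (s : Setoid X) (U : Set X) : Prop :=
  ∀ ⦃a b⦄, s a b → a ∈ U → b ∈ U

theorem IsSaturated.preimage_image_mk {s : Setoid X} {U : Set X} (hU : s.IsSaturated U) :
    Quotient.mk s ⁻¹' (Quotient.mk s '' U) = U :=
  Subset.antisymm (fun _ ⟨_, ha, hab⟩ ↦ hU (Quotient.exact hab) ha) (subset_preimage_image _ _)

theorem t2Space_quotient_of_separated [TopologicalSpace X] {s : Setoid X}
    (h : ∀ x y, ¬ s x y → ∃ U V : Set X, IsOpen U ∧ IsOpen V ∧ s.IsSaturated U ∧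
      s.IsSaturated V ∧ x ∈ U ∧ y ∈ V ∧ Disjoint U V) :
    T2Space (Quotient s) := by
  refine ⟨Quotient.ind₂ fun x y hxy ↦ ?_⟩
  obtain ⟨U, V, hUo, hVo, hUs, hVs, hxU, hyV, hUV⟩ := h x y fun hs ↦ hxy (Quotient.sound hs)
  have hmk : IsQuotientMap (Quotient.mk s) := isQuotientMap_quotient_mk'
  refine ⟨_, _, ?_, ?_, mem_image_of_mem _ hxU, mem_image_of_mem _ hyV, ?_⟩
  · rwa [← hmk.isOpen_preimage, hUs.preimage_image_mk]
  · rwa [← hmk.isOpen_preimage, hVs.preimage_image_mk]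
  · rwa [← disjoint_preimage_iff hmk.surjective, hUs.preimage_image_mk, hVs.preimage_image_mk]

end Setoid

section Double

variable {B : Type u} (K : Set B)

/-- `B × Bool` is two copies of `B`; `(b, i)` and `(b, j)` are identified when `b ∈ K`. -/
def doubleSetoid : Setoid (B × Bool) where
  r x y := x.1 = y.1 ∧ (x.1 ∈ K ∨ x.2 = y.2)
  iseqv :=
    { refl := fun _ ↦ ⟨rfl, Or.inr rfl⟩
      symm := fun ⟨h₁, h₂⟩ ↦ ⟨h₁.symm, h₂.imp (h₁ ▸ ·) Eq.symm⟩
      trans := fun ⟨h₁, h₂⟩ ⟨h₃, h₄⟩ ↦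
        ⟨h₁.trans h₃, h₂.elim Or.inl fun h ↦ h₄.imp (h₁ ▸ ·) h.trans⟩ }

theorem doubleSetoid_isSaturated_prod_univ (W : Set B) :
    (doubleSetoid K).IsSaturated (W ×ˢ univ) :=
  fun _ _ ⟨h, _⟩ ha ↦ ⟨h ▸ ha.1, trivial⟩

theorem doubleSetoid_isSaturated_compl_prod_singleton (i : Bool) :
    (doubleSetoid K).IsSaturated (Kᶜ ×ˢ {i}) :=
  fun _ _ ⟨h₁, h₂⟩ ha ↦ ⟨h₁ ▸ ha.1, (h₂.resolve_left ha.1) ▸ ha.2⟩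

abbrev Double : Type u := Quotient (doubleSetoid K)

def Double.sheet (i : Bool) (b : B) : Double K := Quotient.mk _ (b, i)

theorem Double.sheet_false_eq_sheet_true_iff {b : B} :
    Double.sheet K false b = Double.sheet K true b ↔ b ∈ K := by
  rw [Double.sheet, Double.sheet, Quotient.eq]
  exact ⟨fun h ↦ h.2.resolve_right Bool.false_ne_true, fun h ↦ ⟨rfl, Or.inl h⟩⟩

variable [TopologicalSpace B]

theorem Double.continuous_sheet (i : Bool) : Continuous (Double.sheet K i) :=
  continuous_quotient_mk'.comp (Continuous.prodMk_left i)

theorem Double.t2Space [T2Space B] (hK : IsClosed K) : T2Space (Double K) := by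
  refine Setoid.t2Space_quotient_of_separated fun x y hxy ↦ ?_
  by_cases hfst : x.1 = y.1
  · have hxK : x.1 ∉ K := fun h ↦ hxy ⟨hfst, Or.inl h⟩
    have hyK : y.1 ∉ K := hfst ▸ hxK
    have hsnd : x.2 ≠ y.2 := fun h ↦ hxy ⟨hfst, Or.inr h⟩
    refine ⟨Kᶜ ×ˢ {x.2}, Kᶜ ×ˢ {y.2}, hK.isOpen_compl.prod (isOpen_discrete _),
      hK.isOpen_compl.prod (isOpen_discrete _), doubleSetoid_isSaturated_compl_prod_singleton K _,
      doubleSetoid_isSaturated_compl_prod_singleton K _, ⟨hxK, rfl⟩, ⟨hyK, rfl⟩, ?_⟩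
    exact disjoint_prod.mpr (Or.inr (disjoint_singleton.mpr hsnd))
  · obtain ⟨U, V, hU, hV, hxU, hyV, hUV⟩ := t2_separation hfst
    exact ⟨U ×ˢ univ, V ×ˢ univ, hU.prod isOpen_univ, hV.prod isOpen_univ,
      doubleSetoid_isSaturated_prod_univ K U, doubleSetoid_isSaturated_prod_univ K V,
      ⟨hxU, trivial⟩, ⟨hyV, trivial⟩, disjoint_prod.mpr (Or.inl hUV)⟩

end Double

theorem not_epi_of_not_dense_general {A B : Type u} [TopologicalSpace B] [T2Space B] (f : A → B)
    (hnd : closure (Set.range f) ≠ Set.univ) :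
    ∃ (C : Type u) (tC : TopologicalSpace C) (_ : @T2Space C tC) (g h : B → C),
      @Continuous _ C _ tC g ∧ @Continuous _ C _ tC h ∧ g ≠ h ∧ g ∘ f = h ∘ f := by
  set K := closure (Set.range f)
  obtain ⟨b₀, hb₀⟩ : ∃ b, b ∉ K := (ne_univ_iff_exists_notMem K).mp hnd
  refine ⟨Double K, inferInstance, Double.t2Space K isClosed_closure, Double.sheet K false,
    Double.sheet K true, Double.continuous_sheet K false, Double.continuous_sheet K true,
    fun hgh ↦ hb₀ ((Double.sheet_false_eq_sheet_true_iff K).mp (congrFun hgh b₀)), ?_⟩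
  funext a
  exact (Double.sheet_false_eq_sheet_true_iff K).mpr (subset_closure (mem_range_self a))

theorem not_epi_of_not_dense {A B : Type u} [TopologicalSpace A] [TopologicalSpace B]
    [T2Space A] [T2Space B] (f : A → B) (hf : Continuous f)
    (hnd : closure (Set.range f) ≠ Set.univ) :
    ∃ (C : Type u) (tC : TopologicalSpace C) (_ : @T2Space C tC) (g h : B → C),
      @Continuous _ C _ tC g ∧ @Continuous _ C _ tC h ∧ g ≠ h ∧ g ∘ f = h ∘ f :=
  not_epi_of_not_dense_general f hnd
end

section
/- Let C be a topological space and x, y ∈ C with x ≁ y, where ∼ is the relation identifying points not separated by continuous maps into Hausdorff spaces. Then there exist disjoint open sets in the Hausdorff quotient H(C) separating the classes r(x) and r(y). -/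
/-! A continuous map into a Hausdorff space that distinguishes `x` and `y` is constant on
`∼`-classes, so it descends to `H(C)`; the preimages of disjoint neighbourhoods of its two
values separate `r x` and `r y`. -/

universe u

def hausSetoid (C : Type u) [TopologicalSpace C] : Setoid C where
  r x y := ∀ (D : Type u) [TopologicalSpace D] [T2Space D] (g : C → D), Continuous g → g x = g y
  iseqv := ⟨fun _ _ _ _ _ _ => rfl,
    fun h D _ _ g hg => (h D g hg).symm,
    fun h1 h2 D _ _ g hg => (h1 D g hg).trans (h2 D g hg)⟩

theorem exists_isOpen_disjoint_of_continuous_ne {X D : Type*} [TopologicalSpace X]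
    [TopologicalSpace D] [T2Space D] {f : X → D} (hf : Continuous f) {a b : X}
    (hab : f a ≠ f b) :
    ∃ U V : Set X, IsOpen U ∧ IsOpen V ∧ Disjoint U V ∧ a ∈ U ∧ b ∈ V := by
  obtain ⟨U, V, hU, hV, haU, hbV, hUV⟩ := t2_separation hab
  exact ⟨f ⁻¹' U, f ⁻¹' V, hU.preimage hf, hV.preimage hf, hUV.preimage f, haU, hbV⟩

theorem hausSetoid.exists_continuous_quotient_ne {C : Type u} [TopologicalSpace C] {x y : C}
    (hxy : ¬ (hausSetoid C).r x y) :
    ∃ (D : Type u) (_ : TopologicalSpace D) (_ : T2Space D)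
      (g : Quotient (hausSetoid C) → D), Continuous g ∧ g ⟦x⟧ ≠ g ⟦y⟧ := by
  obtain ⟨D, _, _, g, hg, hne⟩ : ∃ (D : Type u) (_ : TopologicalSpace D) (_ : T2Space D)
      (g : C → D), Continuous g ∧ g x ≠ g y := by
    by_contra! h
    exact hxy fun D _ _ g hg => h D _ ‹_› g hg
  exact ⟨D, _, ‹_›, Quotient.lift g fun _ _ hab => hab D g hg, continuous_quot_lift _ hg, hne⟩

theorem haus_quotient_separates {C : Type u} [TopologicalSpace C] (x y : C)
    (hxy : ¬ (hausSetoid C).r x y) :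
    ∃ O₁ O₂ : Set (Quotient (hausSetoid C)), IsOpen O₁ ∧ IsOpen O₂ ∧ Disjoint O₁ O₂ ∧
      Quotient.mk (hausSetoid C) x ∈ O₁ ∧ Quotient.mk (hausSetoid C) y ∈ O₂ := by
  obtain ⟨D, _, _, g, hg, hne⟩ := hausSetoid.exists_continuous_quotient_ne hxy
  exact exists_isOpen_disjoint_of_continuous_ne hg hne
end
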